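/- Let Ω be a probability amplitude on ℝⁿ with |q|²Ω(q)² integrable, let M be an n×n real symmetric positive definite matrix, and assume the position covariance matrix V, with entries V_{jk} := ⟨q_j q_k⟩ − ⟨q_j⟩⟨q_k⟩, is positive definite. Then every eigenvalue of V⁻¹M is real and positive, and the mean value of the quantum potential satisfies ⟨Q⟩ ≥ (ħ²/8) λ_max(V⁻¹M), where λ_max(V⁻¹M) is the largest eigenvalue of V⁻¹M. -/

import Mathlib

open MeasureTheory Matrix Filter

/-- Partial derivative `∂ⱼ f` of a function on `ℝⁿ`. -/
noncomputable def pd {n : ℕ} (j : Fin n) (f : (Fin n → ℝ) → ℝ) (q : Fin n → ℝ) : ℝ :=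
  fderiv ℝ f q (Pi.single j 1)

/-- Mean value `⟨T⟩ = ∫ Ω² T` with respect to the probability density `Ω²`. -/
noncomputable def expec {n : ℕ} (Ω T : (Fin n → ℝ) → ℝ) : ℝ :=
  ∫ q, (Ω q) ^ 2 * T q

/-- Mean value of the quantum potential `⟨Q⟩ = -(ħ²/2) ∫ Ω Σⱼₖ Mⱼₖ ∂ⱼ∂ₖΩ`. -/
noncomputable def meanQ {n : ℕ} (hbar : ℝ) (M : Matrix (Fin n) (Fin n) ℝ)
    (Ω : (Fin n → ℝ) → ℝ) : ℝ :=
  -(hbar ^ 2 / 2) * ∫ q, Ω q * ∑ j, ∑ k, M j k * pd j (pd k Ω) q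

/-- The position covariance matrix `Vⱼₖ = ⟨qⱼqₖ⟩ - ⟨qⱼ⟩⟨qₖ⟩`. -/
noncomputable def posCovMatrix {n : ℕ} (Ω : (Fin n → ℝ) → ℝ) :
    Matrix (Fin n) (Fin n) ℝ :=
  Matrix.of fun j k =>
    expec Ω (fun q => q j * q k) - expec Ω (fun q => q j) * expec Ω (fun q => q k)

/-!
Integrating by parts, `⟨Q⟩ = (ħ²/2) tr(M G)` with `G_{jk} = ∫ ∂ⱼΩ ∂ₖΩ`, and
`∫ Ω (qⱼ - ⟨qⱼ⟩) ∂ₖΩ = -δⱼₖ/2`. Expanding `0 ≤ ∫ (a ⬝ Ω(q - ⟨q⟩) + b ⬝ ∇Ω)²` gives the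
uncertainty relation `a ⬝ b ≤ aᵀVa + bᵀGb`; the choice `a = V⁻¹b/2` turns it into `G ≥ V⁻¹/4`,
hence `tr(M G) ≥ tr(V⁻¹M)/4`. With `R = √M`, the matrix `V⁻¹M` is similar to the positive definite
`R V⁻¹ R`, so its eigenvalues are real and positive, and the largest is at most their sum
`tr(V⁻¹M)`.
-/

namespace Matrix

open scoped MatrixOrder ComplexOrder

variable {ι 𝕜 : Type*} [Fintype ι] [DecidableEq ι] [RCLike 𝕜]

theorem PosSemidef.trace_mul_nonneg {A B : Matrix ι ι 𝕜} (hA : A.PosSemidef)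
    (hB : B.PosSemidef) : 0 ≤ (A * B).trace := by
  have hR : (CFC.sqrt A)ᴴ = CFC.sqrt A := (CFC.sqrt_nonneg A).isSelfAdjoint
  have := (hB.conjTranspose_mul_mul_same (CFC.sqrt A)).trace_nonneg
  rwa [hR, trace_mul_cycle, CFC.sqrt_mul_sqrt_self A hA.nonneg] at this

theorem PosDef.sqrt_mul_mul_sqrt {A B : Matrix ι ι 𝕜} (hA : A.PosDef) (hB : B.PosDef) :
    (CFC.sqrt B * A * CFC.sqrt B).PosDef := by
  have hR : (CFC.sqrt B)ᴴ = CFC.sqrt B := (CFC.sqrt_nonneg B).isSelfAdjoint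
  have hu : IsUnit (CFC.sqrt B) := CFC.isUnit_sqrt_iff_isStrictlyPositive.mpr hB.isStrictlyPositive
  simpa only [hR] using hA.conjTranspose_mul_mul_same (mulVec_injective_of_isUnit hu)

theorem PosDef.spectrum_mul_eq {R : Type*} [CommSemiring R] [Algebra R (Matrix ι ι 𝕜)]
    {A B : Matrix ι ι 𝕜} (hB : B.PosDef) :
    spectrum R (A * B) = spectrum R (CFC.sqrt B * A * CFC.sqrt B) := by
  obtain ⟨u, hu⟩ : IsUnit (CFC.sqrt B) :=
    CFC.isUnit_sqrt_iff_isStrictlyPositive.mpr hB.isStrictlyPositive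
  have hB' : B = u * u := by rw [hu, CFC.sqrt_mul_sqrt_self B hB.posSemidef.nonneg]
  calc spectrum R (A * B) = spectrum R (↑u⁻¹ * (u * A * u) * u) := by
        rw [hB']; simp only [mul_assoc, Units.inv_mul_cancel_left]
    _ = spectrum R (CFC.sqrt B * A * CFC.sqrt B) := by rw [spectrum.units_conjugate', hu]

theorem PosDef.spectrum_mul_subset {A B : Matrix ι ι 𝕜} (hA : A.PosDef) (hB : B.PosDef) :
    spectrum 𝕜 (A * B) ⊆ RCLike.ofReal '' Set.Ioi 0 := by
  have hS := hA.sqrt_mul_mul_sqrt hB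
  rw [hB.spectrum_mul_eq, hS.isHermitian.spectrum_eq_image_range]
  rintro _ ⟨_, ⟨i, rfl⟩, rfl⟩
  exact ⟨_, hS.eigenvalues_pos i, rfl⟩

theorem PosDef.exists_isGreatest_spectrum_mul_le_trace [Nonempty ι] {A B : Matrix ι ι ℝ}
    (hA : A.PosDef) (hB : B.PosDef) :
    ∃ l, IsGreatest (spectrum ℝ (A * B)) l ∧ l ≤ (A * B).trace := by
  have hS := hA.sqrt_mul_mul_sqrt hB
  obtain ⟨i, -, hi⟩ := Finset.exists_max_image Finset.univ hS.isHermitian.eigenvalues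
    Finset.univ_nonempty
  refine ⟨hS.isHermitian.eigenvalues i, ?_, ?_⟩
  · rw [hB.spectrum_mul_eq, hS.isHermitian.spectrum_real_eq_range_eigenvalues]
    exact ⟨⟨i, rfl⟩, by rintro _ ⟨j, rfl⟩; exact hi j (Finset.mem_univ j)⟩
  · have htr : (A * B).trace = (CFC.sqrt B * A * CFC.sqrt B).trace := by
      rw [trace_mul_cycle, CFC.sqrt_mul_sqrt_self B hB.posSemidef.nonneg, trace_mul_comm]
    rw [htr, hS.isHermitian.trace_eq_sum_eigenvalues]
    exact Finset.single_le_sum (fun j _ => (hS.eigenvalues_pos j).le) (Finset.mem_univ i)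

theorem PosDef.map_ofReal {A : Matrix ι ι ℝ} (hA : A.PosDef) :
    (A.map (RCLike.ofReal : ℝ → 𝕜)).PosDef := by
  set R := CFC.sqrt A
  have hR : Rᴴ = R := (CFC.sqrt_nonneg A).isSelfAdjoint
  have hu : IsUnit R := CFC.isUnit_sqrt_iff_isStrictlyPositive.mpr hA.isStrictlyPositive
  have hRR : R * R = A := CFC.sqrt_mul_sqrt_self A hA.posSemidef.nonneg
  have hu' : IsUnit (R.map (RCLike.ofReal : ℝ → 𝕜)) :=
    hu.map (RCLike.ofRealAm (K := 𝕜)).toRingHom.mapMatrix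
  have := PosDef.one.conjTranspose_mul_mul_same (mulVec_injective_of_isUnit hu')
  rwa [mul_one, ← conjTranspose_map _ (fun _ => by simp), hR, ← Matrix.map_mul, hRR] at this

theorem posSemidef_sub_inv_of_dotProduct_le {V G : Matrix ι ι ℝ} (hV : V.PosDef)
    (hG : G.IsHermitian) (h : ∀ a b, a ⬝ᵥ b ≤ a ⬝ᵥ V *ᵥ a + b ⬝ᵥ G *ᵥ b) :
    (G - (4 : ℝ)⁻¹ • V⁻¹).PosSemidef := by
  refine .of_dotProduct_mulVec_nonneg (hG.sub (hV.inv.isHermitian.smul (.all _))) fun x => ?_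
  have hVV : V *ᵥ V⁻¹ *ᵥ x = x := by
    rw [mulVec_mulVec, mul_nonsing_inv V (isUnit_iff_isUnit_det V |>.mp hV.isUnit), one_mulVec]
  have hx := h ((2 : ℝ)⁻¹ • V⁻¹ *ᵥ x) x
  simp only [mulVec_smul, hVV, smul_dotProduct, dotProduct_smul, smul_eq_mul,
    dotProduct_comm (V⁻¹ *ᵥ x) x] at hx
  simp only [star_trivial, sub_mulVec, smul_mulVec, dotProduct_sub, dotProduct_smul, smul_eq_mul]
  linarith

end Matrix

noncomputable section L2

variable {α ι : Type*} [MeasurableSpace α] [Fintype ι]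

def integralGram (μ : Measure α) (u v : α → ι → ℝ) : Matrix ι ι ℝ :=
  Matrix.of fun j k => ∫ x, u x j * v x k ∂μ

variable {μ : Measure α} {u v : α → ι → ℝ}

theorem integral_dotProduct_mul_dotProduct (hu : ∀ j, MemLp (u · j) 2 μ)
    (hv : ∀ k, MemLp (v · k) 2 μ) (a b : ι → ℝ) :
    ∫ x, (a ⬝ᵥ u x) * (b ⬝ᵥ v x) ∂μ = a ⬝ᵥ integralGram μ u v *ᵥ b := by
  have huv j k : Integrable (fun x => a j * b k * (u x j * v x k)) μ :=
    ((hu j).integrable_mul (hv k)).const_mul _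
  calc ∫ x, (a ⬝ᵥ u x) * (b ⬝ᵥ v x) ∂μ
      = ∫ x, ∑ j, ∑ k, a j * b k * (u x j * v x k) ∂μ := by
        simp only [dotProduct, Finset.sum_mul_sum, mul_mul_mul_comm]
    _ = ∑ j, ∑ k, a j * b k * ∫ x, u x j * v x k ∂μ := by
        rw [integral_finsetSum _ fun j _ => integrable_finsetSum _ fun k _ => huv j k]
        simp only [integral_finsetSum _ fun k _ => huv _ k, integral_const_mul]
    _ = a ⬝ᵥ integralGram μ u v *ᵥ b := by
        simp only [integralGram, dotProduct, mulVec, of_apply, Finset.mul_sum]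
        exact Finset.sum_congr rfl fun j _ => Finset.sum_congr rfl fun k _ => by ring

theorem integralGram_quadratic_nonneg (hu : ∀ j, MemLp (u · j) 2 μ)
    (hv : ∀ k, MemLp (v · k) 2 μ) (a b : ι → ℝ) :
    0 ≤ a ⬝ᵥ integralGram μ u u *ᵥ a + 2 * (a ⬝ᵥ integralGram μ u v *ᵥ b)
      + b ⬝ᵥ integralGram μ v v *ᵥ b := by
  have hf : MemLp (fun x => a ⬝ᵥ u x) 2 μ :=
    memLp_finsetSum _ fun j _ => (hu j).const_mul (a j)
  have hg : MemLp (fun x => b ⬝ᵥ v x) 2 μ :=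
    memLp_finsetSum _ fun k _ => (hv k).const_mul (b k)
  have hff : Integrable (fun x => (a ⬝ᵥ u x) * (a ⬝ᵥ u x)) μ := hf.integrable_mul hf
  have hfg : Integrable (fun x => 2 * ((a ⬝ᵥ u x) * (b ⬝ᵥ v x))) μ :=
    (hf.integrable_mul hg).const_mul 2
  have hgg : Integrable (fun x => (b ⬝ᵥ v x) * (b ⬝ᵥ v x)) μ := hg.integrable_mul hg
  calc 0 ≤ ∫ x, (a ⬝ᵥ u x + b ⬝ᵥ v x) ^ 2 ∂μ := integral_nonneg fun x => sq_nonneg _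
    _ = ∫ x, (a ⬝ᵥ u x) * (a ⬝ᵥ u x) + 2 * ((a ⬝ᵥ u x) * (b ⬝ᵥ v x))
          + (b ⬝ᵥ v x) * (b ⬝ᵥ v x) ∂μ := by congr 1 with x; ring
    _ = _ := by
      rw [integral_add (hff.fun_add hfg) hgg, integral_add hff hfg, integral_const_mul,
        integral_dotProduct_mul_dotProduct hu hu, integral_dotProduct_mul_dotProduct hu hv,
        integral_dotProduct_mul_dotProduct hv hv]

end L2

section PartialDerivatives

variable {n : ℕ}

theorem pd_mul {f g : (Fin n → ℝ) → ℝ} {q : Fin n → ℝ} (j : Fin n)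
    (hf : DifferentiableAt ℝ f q) (hg : DifferentiableAt ℝ g q) :
    pd j (fun x => f x * g x) q = pd j f q * g q + f q * pd j g q := by
  simp only [pd, fderiv_fun_mul hf hg, _root_.add_apply, _root_.smul_apply, smul_eq_mul]
  ring

theorem pd_apply_coord (j k : Fin n) (q : Fin n → ℝ) :
    pd k (fun x : Fin n → ℝ => x j) q = (1 : Matrix (Fin n) (Fin n) ℝ) j k := by
  simp [pd, fderiv_apply, one_apply, Pi.single_apply]

theorem differentiable_pd {f : (Fin n → ℝ) → ℝ} (hf : ContDiff ℝ 2 f) (k : Fin n) :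
    Differentiable ℝ (pd k f) :=
  ((hf.fderiv_right (by norm_num)).clm_apply contDiff_const).differentiable one_ne_zero

theorem pd_sq {f : (Fin n → ℝ) → ℝ} {q : Fin n → ℝ} (k : Fin n) (hf : DifferentiableAt ℝ f q) :
    pd k (fun x => f x ^ 2) q = 2 * (f q * pd k f q) := by
  simp only [sq, pd_mul k hf hf]
  ring

end PartialDerivatives

noncomputable section Amplitude

variable {n : ℕ}

def ampCentered (Ω : (Fin n → ℝ) → ℝ) (q : Fin n → ℝ) : Fin n → ℝ :=
  fun j => Ω q * (q j - expec Ω fun x => x j)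

def ampGrad (Ω : (Fin n → ℝ) → ℝ) (q : Fin n → ℝ) : Fin n → ℝ :=
  fun k => pd k Ω q

/-- A quarter of the Fisher information matrix of the density `Ω²`. -/
def gradGram (Ω : (Fin n → ℝ) → ℝ) : Matrix (Fin n) (Fin n) ℝ :=
  integralGram volume (ampGrad Ω) (ampGrad Ω)

variable {Ω : (Fin n → ℝ) → ℝ}

theorem isHermitian_gradGram : (gradGram Ω).IsHermitian := by
  ext j k
  simp only [gradGram, integralGram, conjTranspose_apply, of_apply, star_trivial, mul_comm]

theorem integrable_amp_sq (hΩnorm : ∫ q, Ω q ^ 2 = 1) : Integrable fun q => Ω q ^ 2 := by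
  by_contra h
  simp [integral_undef h] at hΩnorm

theorem memLp_amp (hΩc : ContDiff ℝ 2 Ω) (hΩnorm : ∫ q, Ω q ^ 2 = 1) : MemLp Ω 2 :=
  (memLp_two_iff_integrable_sq hΩc.continuous.aestronglyMeasurable).mpr
    (integrable_amp_sq hΩnorm)

theorem memLp_amp_mul_coord (hΩc : ContDiff ℝ 2 Ω) {j : Fin n}
    (hqq : Integrable fun q : Fin n → ℝ => Ω q ^ 2 * (q j * q j)) :
    MemLp (fun q => Ω q * q j) 2 :=
  (memLp_two_iff_integrable_sq (f := fun q => Ω q * q j)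
    (hΩc.continuous.mul (continuous_apply j)).aestronglyMeasurable).mpr
    (hqq.congr (.of_forall fun q => by ring))

theorem memLp_pd (hΩc : ContDiff ℝ 2 Ω) {k : Fin n}
    (hint2 : Integrable fun q => pd k Ω q * pd k Ω q) : MemLp (pd k Ω) 2 :=
  (memLp_two_iff_integrable_sq (differentiable_pd hΩc k).continuous.aestronglyMeasurable).mpr
    (by simpa only [sq] using hint2)

theorem memLp_ampCentered (hΩc : ContDiff ℝ 2 Ω) (hΩnorm : ∫ q, Ω q ^ 2 = 1) {j : Fin n}
    (hqq : Integrable fun q : Fin n → ℝ => Ω q ^ 2 * (q j * q j)) :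
    MemLp (ampCentered Ω · j) 2 :=
  ((memLp_amp_mul_coord hΩc hqq).sub ((memLp_amp hΩc hΩnorm).const_mul _)).ae_eq
    (.of_forall fun q => by simp only [ampCentered, Pi.sub_apply]; ring)

theorem posCovMatrix_eq_integralGram (hΩc : ContDiff ℝ 2 Ω) (hΩnorm : ∫ q, Ω q ^ 2 = 1)
    (hqq : ∀ j k, Integrable (fun q : Fin n → ℝ => Ω q ^ 2 * (q j * q k))) :
    posCovMatrix Ω = integralGram volume (ampCentered Ω) (ampCentered Ω) := by
  have hΩ := memLp_amp hΩc hΩnorm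
  have hΩ2 := integrable_amp_sq hΩnorm
  have hq1 j : Integrable fun q : Fin n → ℝ => Ω q ^ 2 * q j :=
    (hΩ.integrable_mul (memLp_amp_mul_coord hΩc (hqq j j))).congr
      (.of_forall fun q => by simp only [Pi.mul_apply]; ring)
  ext j k
  set m : Fin n → ℝ := fun j => expec Ω fun x => x j
  have hexpand : (fun q => ampCentered Ω q j * ampCentered Ω q k) = fun q =>
      Ω q ^ 2 * (q j * q k) - m k * (Ω q ^ 2 * q j) - m j * (Ω q ^ 2 * q k)
        + m j * m k * Ω q ^ 2 := by
    ext q; simp only [ampCentered, m]; ring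
  have h1 := (hqq j k).sub' ((hq1 j).const_mul (m k))
  have h2 := h1.sub' ((hq1 k).const_mul (m j))
  rw [integralGram, of_apply, hexpand, integral_add h2 (hΩ2.const_mul _),
    integral_sub h1 ((hq1 k).const_mul _), integral_sub (hqq j k) ((hq1 j).const_mul _),
    integral_const_mul, integral_const_mul, integral_const_mul, hΩnorm]
  simp only [posCovMatrix, of_apply, expec, m]
  ring

theorem integral_amp_mul_pd_eq_zero (hΩc : ContDiff ℝ 2 Ω) {k : Fin n}
    (hbd : ∫ q, pd k (fun x => Ω x ^ 2) q = 0) : ∫ q, Ω q * pd k Ω q = 0 := by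
  simpa [pd_sq k (hΩc.differentiable two_ne_zero _), integral_const_mul] using hbd

theorem integral_coord_mul_amp_mul_pd (hΩc : ContDiff ℝ 2 Ω) (hΩnorm : ∫ q, Ω q ^ 2 = 1)
    {j k : Fin n} (hint : Integrable fun q : Fin n → ℝ => q j * (Ω q * pd k Ω q))
    (hbd : ∫ q, pd k (fun x : Fin n → ℝ => x j * Ω x ^ 2) q = 0) :
    ∫ q, q j * (Ω q * pd k Ω q) = -(2 : ℝ)⁻¹ * (1 : Matrix (Fin n) (Fin n) ℝ) j k := by
  have hΩd := hΩc.differentiable two_ne_zero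
  have hpd q : pd k (fun x : Fin n → ℝ => x j * Ω x ^ 2) q
      = (1 : Matrix (Fin n) (Fin n) ℝ) j k * Ω q ^ 2 + 2 * (q j * (Ω q * pd k Ω q)) := by
    rw [pd_mul (g := fun x => Ω x ^ 2) k (differentiableAt_apply j q) ((hΩd q).pow 2),
      pd_apply_coord, pd_sq k (hΩd q)]
    ring
  simp only [hpd] at hbd
  rw [integral_add ((integrable_amp_sq hΩnorm).const_mul _) (hint.const_mul _),
    integral_const_mul, integral_const_mul, hΩnorm] at hbd
  linarith

theorem integralGram_ampCentered_ampGrad (hΩc : ContDiff ℝ 2 Ω) (hΩnorm : ∫ q, Ω q ^ 2 = 1)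
    (hqq : ∀ j k, Integrable (fun q : Fin n → ℝ => Ω q ^ 2 * (q j * q k)))
    (hint2 : ∀ j k, Integrable (fun q => pd j Ω q * pd k Ω q))
    (hbd2 : ∀ k, ∫ q, pd k (fun x => (Ω x) ^ 2) q = 0)
    (hbd3 : ∀ j k, ∫ q, pd k (fun x : Fin n → ℝ => x j * (Ω x) ^ 2) q = 0) :
    integralGram volume (ampCentered Ω) (ampGrad Ω) = -(2 : ℝ)⁻¹ • 1 := by
  ext j k
  have hΩpd : Integrable fun q => Ω q * pd k Ω q :=
    (memLp_amp hΩc hΩnorm).integrable_mul (memLp_pd hΩc (hint2 k k))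
  have hqΩpd : Integrable fun q : Fin n → ℝ => q j * (Ω q * pd k Ω q) :=
    ((memLp_amp_mul_coord hΩc (hqq j j)).integrable_mul (memLp_pd hΩc (hint2 k k))).congr
      (.of_forall fun q => by simp only [Pi.mul_apply]; ring)
  have hexpand : (fun q => ampCentered Ω q j * ampGrad Ω q k) = fun q =>
      q j * (Ω q * pd k Ω q) - (expec Ω fun x => x j) * (Ω q * pd k Ω q) := by
    ext q; simp only [ampCentered, ampGrad]; ring
  rw [integralGram, of_apply, hexpand, integral_sub hqΩpd (hΩpd.const_mul _), integral_const_mul,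
    integral_coord_mul_amp_mul_pd hΩc hΩnorm hqΩpd (hbd3 j k),
    integral_amp_mul_pd_eq_zero hΩc (hbd2 k), Matrix.smul_apply, smul_eq_mul]
  ring

theorem dotProduct_le_posCovMatrix_add_gradGram (hΩc : ContDiff ℝ 2 Ω)
    (hΩnorm : ∫ q, Ω q ^ 2 = 1)
    (hqq : ∀ j k, Integrable (fun q : Fin n → ℝ => Ω q ^ 2 * (q j * q k)))
    (hint2 : ∀ j k, Integrable (fun q => pd j Ω q * pd k Ω q))
    (hbd2 : ∀ k, ∫ q, pd k (fun x => (Ω x) ^ 2) q = 0)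
    (hbd3 : ∀ j k, ∫ q, pd k (fun x : Fin n → ℝ => x j * (Ω x) ^ 2) q = 0) (a b : Fin n → ℝ) :
    a ⬝ᵥ b ≤ a ⬝ᵥ posCovMatrix Ω *ᵥ a + b ⬝ᵥ gradGram Ω *ᵥ b := by
  have h := integralGram_quadratic_nonneg (v := ampGrad Ω)
    (fun j => memLp_ampCentered hΩc hΩnorm (hqq j j)) (fun k => memLp_pd hΩc (hint2 k k)) a b
  rw [integralGram_ampCentered_ampGrad hΩc hΩnorm hqq hint2 hbd2 hbd3, smul_mulVec, one_mulVec,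
    dotProduct_smul, smul_eq_mul] at h
  rw [posCovMatrix_eq_integralGram hΩc hΩnorm hqq, gradGram]
  linarith

theorem integral_amp_mul_pd_pd (hΩc : ContDiff ℝ 2 Ω) {j k : Fin n}
    (hint1 : Integrable fun q => Ω q * pd j (pd k Ω) q)
    (hint2 : Integrable fun q => pd j Ω q * pd k Ω q)
    (hbd : ∫ q, pd j (fun x => Ω x * pd k Ω x) q = 0) :
    ∫ q, Ω q * pd j (pd k Ω) q = -gradGram Ω j k := by
  simp only [pd_mul j (hΩc.differentiable two_ne_zero _) (differentiable_pd hΩc k _)] at hbd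
  rw [integral_add hint2 hint1] at hbd
  simp only [gradGram, integralGram, ampGrad, of_apply]
  linarith

theorem meanQ_eq_trace_mul_gradGram (hbar : ℝ) (M : Matrix (Fin n) (Fin n) ℝ)
    (hΩc : ContDiff ℝ 2 Ω) (hint1 : ∀ j k, Integrable (fun q => Ω q * pd j (pd k Ω) q))
    (hint2 : ∀ j k, Integrable (fun q => pd j Ω q * pd k Ω q))
    (hbd1 : ∀ j k, ∫ q, pd j (fun x => Ω x * pd k Ω x) q = 0) :
    meanQ hbar M Ω = hbar ^ 2 / 2 * (M * gradGram Ω).trace := by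
  have hint j k : Integrable fun q => M j k * (Ω q * pd j (pd k Ω) q) := (hint1 j k).const_mul _
  have hsum : ∫ q, Ω q * ∑ j, ∑ k, M j k * pd j (pd k Ω) q
      = -∑ j, ∑ k, M j k * gradGram Ω j k := by
    simp only [Finset.mul_sum, mul_left_comm (Ω _)]
    rw [integral_finsetSum _ fun j _ => integrable_finsetSum _ fun k _ => hint j k]
    simp only [integral_finsetSum _ fun k _ => hint _ k, integral_const_mul,
      integral_amp_mul_pd_pd hΩc (hint1 _ _) (hint2 _ _) (hbd1 _ _), mul_neg,
      Finset.sum_neg_distrib]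
  have htr : (M * gradGram Ω).trace = ∑ j, ∑ k, M j k * gradGram Ω j k :=
    Finset.sum_congr rfl fun j _ => by
      simp only [diag, mul_apply, ← isHermitian_gradGram.apply j, star_trivial]
  rw [meanQ, hsum, htr]
  ring

end Amplitude

theorem meanQ_ge_linear_bound_general {n : ℕ} (hn : 1 ≤ n) (hbar : ℝ)
    (Ω : (Fin n → ℝ) → ℝ) (hΩc : ContDiff ℝ 2 Ω)
    (hΩnorm : ∫ q, (Ω q) ^ 2 = 1)
    (M : Matrix (Fin n) (Fin n) ℝ) (hM : M.PosDef)
    (hqq : ∀ j k, Integrable (fun q : Fin n → ℝ => (Ω q) ^ 2 * (q j * q k)))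
    -- the position covariance matrix is positive definite
    (hV : (posCovMatrix Ω).PosDef)
    -- all integrals appearing converge absolutely
    (hint1 : ∀ j k, Integrable (fun q => Ω q * pd j (pd k Ω) q))
    (hint2 : ∀ j k, Integrable (fun q => pd j Ω q * pd k Ω q))
    -- all boundary terms in integration by parts vanish
    (hbd1 : ∀ j k, ∫ q, pd j (fun x => Ω x * pd k Ω x) q = 0)
    (hbd2 : ∀ k, ∫ q, pd k (fun x => (Ω x) ^ 2) q = 0)
    (hbd3 : ∀ j k, ∫ q, pd k (fun x : Fin n → ℝ => x j * (Ω x) ^ 2) q = 0) :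
    (∀ μ ∈ spectrum ℂ (((posCovMatrix Ω)⁻¹ * M).map (Complex.ofReal : ℝ → ℂ)),
      μ.im = 0 ∧ 0 < μ.re) ∧
    ∃ lmax ∈ spectrum ℝ ((posCovMatrix Ω)⁻¹ * M),
      (∀ r ∈ spectrum ℝ ((posCovMatrix Ω)⁻¹ * M), r ≤ lmax) ∧
      meanQ hbar M Ω ≥ hbar ^ 2 / 8 * lmax := by
  have : Nonempty (Fin n) := ⟨⟨0, hn⟩⟩
  obtain ⟨l, ⟨hl, hmax⟩, hl_trace⟩ := hV.inv.exists_isGreatest_spectrum_mul_le_trace hM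
  refine ⟨fun μ hμ => ?_, l, hl, hmax, ?_⟩
  · rw [show ((posCovMatrix Ω)⁻¹ * M).map Complex.ofReal = _ from
      Matrix.map_mul (f := Complex.ofRealHom)] at hμ
    obtain ⟨r, hr, rfl⟩ := hV.inv.map_ofReal.spectrum_mul_subset hM.map_ofReal hμ
    exact ⟨Complex.ofReal_im r, hr⟩
  · have hG := posSemidef_sub_inv_of_dotProduct_le hV isHermitian_gradGram
      (dotProduct_le_posCovMatrix_add_gradGram hΩc hΩnorm hqq hint2 hbd2 hbd3)
    have htr := hM.posSemidef.trace_mul_nonneg hG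
    rw [mul_sub, trace_sub, mul_smul_comm, trace_smul, smul_eq_mul,
      trace_mul_comm M (posCovMatrix Ω)⁻¹] at htr
    have hquarter : l / 4 ≤ (M * gradGram Ω).trace := by linarith
    rw [meanQ_eq_trace_mul_gradGram hbar M hΩc hint1 hint2 hbd1, ge_iff_le]
    linarith [mul_le_mul_of_nonneg_left hquarter (sq_nonneg hbar)]

/-- every eigenvalue of `V⁻¹M` is real and positive and
`⟨Q⟩ ≥ (ħ²/8) λmax(V⁻¹M)`. -/
theorem meanQ_ge_linear_bound {n : ℕ} (hn : 1 ≤ n) (hbar : ℝ) (hhbar : 0 < hbar)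
    (Ω : (Fin n → ℝ) → ℝ) (hΩc : ContDiff ℝ 2 Ω) (hΩpos : ∀ q, 0 < Ω q)
    (hΩnorm : ∫ q, (Ω q) ^ 2 = 1)
    (M : Matrix (Fin n) (Fin n) ℝ) (hM : M.PosDef)
    -- `|q|² Ω²` is integrable
    (hq2 : Integrable (fun q : Fin n → ℝ => ‖q‖ ^ 2 * (Ω q) ^ 2))
    (hq1 : ∀ j, Integrable (fun q : Fin n → ℝ => (Ω q) ^ 2 * q j))
    (hqq : ∀ j k, Integrable (fun q : Fin n → ℝ => (Ω q) ^ 2 * (q j * q k)))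
    -- the position covariance matrix is positive definite
    (hV : (posCovMatrix Ω).PosDef)
    -- all integrals appearing converge absolutely
    (hint1 : ∀ j k, Integrable (fun q => Ω q * pd j (pd k Ω) q))
    (hint2 : ∀ j k, Integrable (fun q => pd j Ω q * pd k Ω q))
    -- all boundary terms in integration by parts vanish
    (hbd1 : ∀ j k, ∫ q, pd j (fun x => Ω x * pd k Ω x) q = 0)
    (hbd2 : ∀ k, ∫ q, pd k (fun x => (Ω x) ^ 2) q = 0)
    (hbd3 : ∀ j k, ∫ q, pd k (fun x : Fin n → ℝ => x j * (Ω x) ^ 2) q = 0) :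
    (∀ μ ∈ spectrum ℂ (((posCovMatrix Ω)⁻¹ * M).map (Complex.ofReal : ℝ → ℂ)),
      μ.im = 0 ∧ 0 < μ.re) ∧
    ∃ lmax ∈ spectrum ℝ ((posCovMatrix Ω)⁻¹ * M),
      (∀ r ∈ spectrum ℝ ((posCovMatrix Ω)⁻¹ * M), r ≤ lmax) ∧
      meanQ hbar M Ω ≥ hbar ^ 2 / 8 * lmax :=
  meanQ_ge_linear_bound_general hn hbar Ω hΩc hΩnorm M hM hqq hV hint1 hint2 hbd1 hbd2 hbd3
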